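/- Let R ≤ M_3(ℂ) be a quantum graph with dim(R) = 2. If R is regular, then R is isomorphic to VT^3_2, the subspace of traceless diagonal matrices in M_3(ℂ). -/

import Mathlib

namespace QG

open Matrix

abbrev Mat (n : ℕ) := Matrix (Fin n) (Fin n) ℂ

/-- `R` is a quantum graph: closed under conjugate transpose and every element is traceless. -/
def IsQuantumGraph {n : ℕ} (R : Submodule ℂ (Mat n)) : Prop :=
  ∀ a ∈ R, aᴴ ∈ R ∧ a.trace = 0

/-- Conjugation `a ↦ u * a * uᴴ` as a linear map. -/
noncomputable def conjMap {n : ℕ} (u : Mat n) : Mat n →ₗ[ℂ] Mat n :=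
  (LinearMap.mulLeft ℂ u).comp (LinearMap.mulRight ℂ uᴴ)

/-- Quantum graphs `R`, `S` are isomorphic if `u R uᴴ = S` for some unitary `u`. -/
def Iso {n : ℕ} (R S : Submodule ℂ (Mat n)) : Prop :=
  ∃ u ∈ Matrix.unitaryGroup (Fin n) ℂ, R.map (conjMap u) = S

/-- `a : Fin d → Mat n` is an orthonormal basis of `R` with respect to the normalized
trace inner product `⟨a, b⟩ = tr(aᴴ b) / n`. -/
def IsONBasis {n d : ℕ} (R : Submodule ℂ (Mat n)) (a : Fin d → Mat n) : Prop :=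
  (∀ i, a i ∈ R) ∧ Submodule.span ℂ (Set.range a) = R ∧
    ∀ i j, ((a i)ᴴ * a j).trace / (n : ℂ) = if i = j then 1 else 0

/-- `R` is regular: its degree matrix `∑ aᵢ aᵢᴴ` (for an orthonormal basis, independent of
the choice) is a scalar multiple of the identity. -/
def IsRegular {n : ℕ} (R : Submodule ℂ (Mat n)) : Prop :=
  ∃ (d : ℕ) (a : Fin d → Mat n), IsONBasis R a ∧
    ∃ c : ℂ, (∑ i, a i * (a i)ᴴ) = c • (1 : Mat n)

/-- `VT32` is the subspace of traceless diagonal matrices in `M_3(ℂ)`. -/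
noncomputable def VT32 : Submodule ℂ (Mat 3) where
  carrier := {a | a.trace = 0 ∧ ∀ i j, i ≠ j → a i j = 0}
  add_mem' := by
    rintro a b ⟨ha1, ha2⟩ ⟨hb1, hb2⟩
    exact ⟨by simp [ha1, hb1], fun i j hij => by
      simp [Matrix.add_apply, ha2 i j hij, hb2 i j hij]⟩
  zero_mem' := by simp
  smul_mem' := by
    rintro c a ⟨ha1, ha2⟩
    exact ⟨by simp [ha1], fun i j hij => by simp [Matrix.smul_apply, ha2 i j hij]⟩



lemma third_exists : ∀ (i j : Fin 3), i ≠ j → ∃ k, i ≠ k ∧ j ≠ k := by decide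

lemma mem_three : ∀ (i j k m : Fin 3), i ≠ j → i ≠ k → j ≠ k → (m = i ∨ m = j ∨ m = k) := by
  decide

lemma univ_three {i j k : Fin 3} (hij : i ≠ j) (hik : i ≠ k) (hjk : j ≠ k) :
    (Finset.univ : Finset (Fin 3)) = {i, j, k} := by
  symm
  apply Finset.eq_univ_iff_forall.mpr
  intro m
  have := mem_three i j k m hij hik hjk
  simp only [Finset.mem_insert, Finset.mem_singleton]
  tauto

lemma sum_three {α : Type*} [AddCommMonoid α] (f : Fin 3 → α) {i j k : Fin 3}
    (hij : i ≠ j) (hik : i ≠ k) (hjk : j ≠ k) :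
    ∑ m, f m = f i + f j + f k := by
  rw [univ_three hij hik hjk, Finset.sum_insert (by simp [hij, hik]),
    Finset.sum_insert (by simp [hjk]), Finset.sum_singleton, add_assoc]

lemma trace_eq_sum (y : Mat 3) : y.trace = ∑ m, y m m := rfl

/-- off-diagonal vanishing lemma -/
lemma offdiag_zero (d : Fin 3 → ℝ) (y : Mat 3)
    (hds : ∑ i, d i = 0) (hds2 : ∑ i, d i ^ 2 = 3)
    (hty : y.trace = 0)
    (hyy : y * y = diagonal (fun m => (2 : ℂ) - (d m : ℂ) ^ 2)) :
    ∀ i j, i ≠ j → d i ≠ d j → y i j = 0 := by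
  intro i j hij hdij
  by_contra hne
  set c : Fin 3 → ℂ := fun m => (2 : ℂ) - (d m : ℂ) ^ 2 with hc
  have hcomm : y * diagonal c = diagonal c * y := by
    rw [← hyy]; exact (mul_assoc y y y).symm
  have hent : ∀ a b, y a b * c b = c a * y a b := by
    intro a b
    have := congrFun (congrFun hcomm a) b
    simpa [Matrix.mul_diagonal, Matrix.diagonal_mul] using this
  -- if entries of c differ, the corresponding entry of y vanishes
  have hvan : ∀ a b, c a ≠ c b → y a b = 0 := by
    intro a b hcab
    have h0 : (c b - c a) * y a b = 0 := by linear_combination (hent a b)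
    rcases mul_eq_zero.mp h0 with h | h
    · exact absurd (by linear_combination h) hcab.symm
    · exact h
  have hcij : c i = c j := by
    by_contra hcij
    exact hne (hvan i j hcij)
  have hd2 : d i ^ 2 = d j ^ 2 := by
    have h2 : ((d i : ℂ)) ^ 2 = (d j : ℂ) ^ 2 := by
      simp only [hc] at hcij; linear_combination -hcij
    exact_mod_cast h2
  have hdj : d j = - d i := by
    have h0 : (d j - d i) * (d j + d i) = 0 := by linear_combination -hd2
    rcases mul_eq_zero.mp h0 with h | h
    · exact absurd (by linarith) hdij
    · linarith
  obtain ⟨k, hik, hjk⟩ := third_exists i j hij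
  have hsum1 := sum_three d hij hik hjk
  have hsum2 := sum_three (fun m => d m ^ 2) hij hik hjk
  rw [hds] at hsum1; rw [hds2] at hsum2
  have hdk : d k = 0 := by linarith
  have hdk2 : d k ^ 2 = 0 := by rw [hdk]; ring
  have hsum2' : (3:ℝ) = d i ^ 2 + d j ^ 2 + d k ^ 2 := hsum2
  have hdi2 : d i ^ 2 = 3 / 2 := by linarith [hd2]
  have hdi0 : d i ≠ 0 := by intro h; rw [h] at hdi2; norm_num at hdi2
  -- c i ≠ c k and c j ≠ c k
  have hcik : c i ≠ c k := by
    simp only [hc, hdk]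
    intro h
    have : ((d i : ℂ)) ^ 2 = 0 := by push_cast at h ⊢; linear_combination -h
    have : d i ^ 2 = (0:ℝ) := by exact_mod_cast this
    rw [hdi2] at this; norm_num at this
  have hcjk : c j ≠ c k := by
    simp only [hc, hdj, hdk] at hcik ⊢; push_cast at hcik ⊢
    intro h; apply hcik; linear_combination h
  have hyik : y i k = 0 := hvan i k hcik
  have hyjk : y j k = 0 := hvan j k hcjk
  have hyki : y k i = 0 := hvan k i (Ne.symm hcik)
  have hykj : y k j = 0 := hvan k j (Ne.symm hcjk)
  -- y k k ^ 2 = 2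
  have hkk : y k k * y k k = 2 := by
    have h := congrFun (congrFun hyy k) k
    rw [Matrix.mul_apply] at h
    rw [sum_three (fun m => y k m * y m k) hij hik hjk] at h
    rw [hyki, hykj] at h
    simp only [Matrix.diagonal_apply_eq] at h
    have hck : c k = 2 := by simp [hc, hdk]
    rw [hck] at h
    linear_combination h
  have hkk0 : y k k ≠ 0 := by
    intro h; rw [h] at hkk; simp at hkk
  have htr : y i i + y j j + y k k = 0 := by
    rw [trace_eq_sum, sum_three (fun m => y m m) hij hik hjk] at hty
    exact hty
  have h := congrFun (congrFun hyy i) j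
  rw [Matrix.mul_apply, sum_three (fun m => y i m * y m j) hij hik hjk] at h
  rw [Matrix.diagonal_apply_ne _ hij] at h
  have hfin : y i j * y k k = 0 := by
    linear_combination y i j * htr - h + y k j * hyik
  rcases mul_eq_zero.mp hfin with h' | h'
  · exact hne h'
  · exact hkk0 h'

set_option maxHeartbeats 1000000 in
lemma diagonalize_diag (d : Fin 3 → ℝ) (y : Mat 3) (hy : yᴴ = y)
    (hds : ∑ i, d i = 0) (hds2 : ∑ i, d i ^ 2 = 3)
    (hty : y.trace = 0) (hty2 : (y * y).trace = 3)
    (hyy : y * y = diagonal (fun m => (2 : ℂ) - (d m : ℂ) ^ 2)) :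
    ∃ u ∈ Matrix.unitaryGroup (Fin 3) ℂ, ∃ f g : Fin 3 → ℂ,
      u * diagonal (fun m => (d m : ℂ)) * uᴴ = diagonal f ∧ u * y * uᴴ = diagonal g := by
  have hoff := offdiag_zero d y hds hds2 hty hyy
  by_cases hall : ∀ i j : Fin 3, i ≠ j → d i ≠ d j
  · refine ⟨1, one_mem _, fun m => (d m : ℂ), fun m => y m m, by simp, ?_⟩
    have hyd : y = diagonal (fun m => y m m) := by
      ext a b
      by_cases hab : a = b
      · subst hab; simp
      · rw [Matrix.diagonal_apply_ne _ hab]; exact hoff a b hab (hall a b hab)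
    simp [← hyd]
  · push_neg at hall
    obtain ⟨i, j, hij, hdij⟩ := hall
    obtain ⟨k, hik, hjk⟩ := third_exists i j hij
    have hsum1 : d i + d j + d k = 0 := (sum_three d hij hik hjk).symm.trans hds
    have hsum2 : d i ^ 2 + d j ^ 2 + d k ^ 2 = 3 :=
      ((sum_three (fun m => d m ^ 2) hij hik hjk).symm.trans hds2 : _)
    have hdk : d k = -2 * d i := by linarith [hdij]
    have hdj2 : d j ^ 2 = d i ^ 2 := by rw [← hdij]
    have hdk2 : d k ^ 2 = 4 * d i ^ 2 := by rw [hdk]; ring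
    have hdi2 : d i ^ 2 = 1 / 2 := by linarith
    have hdi0 : d i ≠ 0 := by intro h; rw [h] at hdi2; norm_num at hdi2
    have hdik : d i ≠ d k := by rw [hdk]; intro h; apply hdi0; linarith
    have hdjk : d j ≠ d k := by rw [← hdij]; exact hdik
    set D : Fin 3 → ℂ := fun m => (d m : ℂ) with hD
    -- x (=diagonal D) commutes with y
    have hcomm : diagonal D * y = y * diagonal D := by
      ext a b
      rw [Matrix.diagonal_mul, Matrix.mul_diagonal]
      by_cases hab : a = b
      · subst hab; ring
      · by_cases hdd : d a = d b
        · simp [hD, hdd]; ring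
        · rw [hoff a b hab hdd]; ring
    -- c values
    have hci : (2 : ℂ) - (d i : ℂ) ^ 2 = 3 / 2 := by
      have h1 : ((d i : ℂ)) ^ 2 = ((1 / 2 : ℝ) : ℂ) := by exact_mod_cast hdi2
      rw [h1]; norm_num
    have hcj : (2 : ℂ) - (d j : ℂ) ^ 2 = 3 / 2 := by rw [hdij] at hci; exact hci
    have hck : (2 : ℂ) - (d k : ℂ) ^ 2 = 0 := by
      have h1 : ((d k : ℂ)) ^ 2 = ((2 : ℝ) : ℂ) := by
        exact_mod_cast (by linarith : d k ^ 2 = 2)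
      rw [h1]; norm_num
    -- minimal polynomial fact : (y*y)*(y*y) = (3/2)•(y*y)
    have hy4 : (y * y) * (y * y) = (3 / 2 : ℂ) • (y * y) := by
      rw [hyy, Matrix.diagonal_mul_diagonal]
      ext a b
      by_cases hab : a = b
      · subst hab
        simp only [Matrix.diagonal_apply_eq, Matrix.smul_apply, smul_eq_mul]
        rcases mem_three i j k a hij hik hjk with h | h | h
        · rw [h, hci]
        · rw [h, hcj]
        · rw [h, hck]; norm_num
      · simp [Matrix.diagonal_apply_ne _ hab]
    -- spectral theorem for y
    have hyh : y.IsHermitian := hy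
    set W : Mat 3 := (hyh.eigenvectorUnitary : Mat 3) with hWdef
    have hW : W ∈ Matrix.unitaryGroup (Fin 3) ℂ := (hyh.eigenvectorUnitary).2
    have hW1 : W * Wᴴ = 1 := by
      rw [← Matrix.star_eq_conjTranspose]; exact Matrix.mem_unitaryGroup_iff.mp hW
    have hW2 : Wᴴ * W = 1 := by
      rw [← Matrix.star_eq_conjTranspose]; exact Matrix.mem_unitaryGroup_iff'.mp hW
    set ev : Fin 3 → ℝ := hyh.eigenvalues with hev
    set F : Mat 3 := diagonal (fun m => (ev m : ℂ)) with hF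
    have hspec : y = W * F * Wᴴ := by
      rw [← Matrix.star_eq_conjTranspose]
      exact hyh.spectral_theorem
    have hE : Wᴴ * y * W = F := by
      rw [hspec]
      have : Wᴴ * (W * F * Wᴴ) * W = (Wᴴ * W) * F * (Wᴴ * W) := by noncomm_ring
      rw [this, hW2, one_mul, mul_one]
    have hE2 : F * F = Wᴴ * (y * y) * W := by
      rw [← hE]
      have : Wᴴ * y * W * (Wᴴ * y * W) = Wᴴ * (y * (W * Wᴴ) * y) * W := by noncomm_ring
      rw [this, hW1, mul_one]
    -- trace facts
    have htrF : F.trace = 0 := by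
      rw [← hE, Matrix.trace_mul_cycle, hW1, one_mul, hty]
    have htrF2 : (F * F).trace = 3 := by
      rw [hE2, Matrix.trace_mul_cycle, hW1, one_mul, hty2]
    have hevs : ∀ a b c : Fin 3, a ≠ b → a ≠ c → b ≠ c → ev a + ev b + ev c = 0 := by
      intro a b c hab hac hbc
      have h := htrF
      rw [hF, Matrix.trace_diagonal, sum_three (fun m => ((ev m : ℂ))) hab hac hbc] at h
      exact_mod_cast h
    have hevs2 : ∀ a b c : Fin 3, a ≠ b → a ≠ c → b ≠ c →
        ev a ^ 2 + ev b ^ 2 + ev c ^ 2 = 3 := by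
      intro a b c hab hac hbc
      have h := htrF2
      rw [hF, Matrix.diagonal_mul_diagonal, Matrix.trace_diagonal,
        sum_three (fun m => ((ev m : ℂ)) * ((ev m : ℂ))) hab hac hbc] at h
      have h' : ev a * ev a + ev b * ev b + ev c * ev c = 3 := by exact_mod_cast h
      nlinarith [h']
    have hF4 : (F * F) * (F * F) = (3 / 2 : ℂ) • (F * F) := by
      rw [hE2]
      have h1 : Wᴴ * (y * y) * W * (Wᴴ * (y * y) * W)
          = Wᴴ * ((y * y) * (W * Wᴴ) * (y * y)) * W := by noncomm_ring
      rw [h1, hW1, mul_one, hy4, Matrix.mul_smul, Matrix.smul_mul]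
    have hquart : ∀ m, ev m = 0 ∨ ev m ^ 2 = 3 / 2 := by
      intro m
      have h := congrFun (congrFun hF4 m) m
      rw [hF, Matrix.diagonal_mul_diagonal, Matrix.diagonal_mul_diagonal] at h
      simp only [Matrix.diagonal_apply_eq, Matrix.smul_apply, smul_eq_mul] at h
      have h' : (ev m * ev m) * (ev m * ev m) = 3 / 2 * (ev m * ev m) := by
        have hC : ((ev m * ev m * (ev m * ev m) : ℝ) : ℂ)
            = ((3 / 2 * (ev m * ev m) : ℝ) : ℂ) := by
          push_cast
          linear_combination h
        exact_mod_cast hC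
      have h0 : ev m ^ 2 * (ev m ^ 2 - 3 / 2) = 0 := by nlinarith [h']
      rcases mul_eq_zero.mp h0 with h2 | h2
      · left; exact (pow_eq_zero_iff (by norm_num : (2:ℕ) ≠ 0)).mp h2
      · right; linarith
    have hdist : ∀ a b, a ≠ b → ev a ≠ ev b := by
      intro a b hab hEq
      obtain ⟨c', hac, hbc⟩ := third_exists a b hab
      have S1 := hevs a b c' hab hac hbc
      have S2 := hevs2 a b c' hab hac hbc
      rcases hquart a with ha | ha <;> rcases hquart c' with hc | hc
      · have hb0 : ev b = 0 := hEq.symm.trans ha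
        rw [ha, hb0, hc] at S2; norm_num at S2
      · have h0 : ev c' = 0 := by rw [ha] at S1 hEq; linarith
        rw [h0] at hc; norm_num at hc
      · have hb2 : ev b = ev a := hEq.symm
        have h0 : ev a = 0 := by rw [hc, hb2] at S1; linarith
        rw [h0] at ha; norm_num at ha
      · have hb2 : ev b ^ 2 = 0 := by linarith [S2, ha, hc]
        have hb0 : ev b = 0 := (pow_eq_zero_iff (by norm_num : (2:ℕ) ≠ 0)).mp hb2
        rw [hb0] at hEq
        rw [hEq] at ha; norm_num at ha
    -- x' := Wᴴ * diagonal D * W commutes with F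
    set x' : Mat 3 := Wᴴ * diagonal D * W with hx'
    have hcom2 : x' * F = F * x' := by
      rw [← hE, hx']
      have h1 : Wᴴ * diagonal D * W * (Wᴴ * y * W)
          = Wᴴ * (diagonal D * (W * Wᴴ) * y) * W := by noncomm_ring
      have h2 : Wᴴ * y * W * (Wᴴ * diagonal D * W)
          = Wᴴ * (y * (W * Wᴴ) * diagonal D) * W := by noncomm_ring
      rw [h1, h2, hW1, mul_one, mul_one, hcomm]
    have hx'diag : x' = diagonal (fun m => x' m m) := by
      ext a b
      by_cases hab : a = b
      · subst hab; simp
      · rw [Matrix.diagonal_apply_ne _ hab]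
        have h := congrFun (congrFun hcom2 a) b
        rw [hF, Matrix.mul_diagonal, Matrix.diagonal_mul] at h
        have hne : ((ev b : ℂ)) - ((ev a : ℂ)) ≠ 0 := by
          intro h0
          have : ev b = ev a := by exact_mod_cast sub_eq_zero.mp h0
          exact hdist a b hab this.symm
        have h0 : x' a b * ((ev b : ℂ) - (ev a : ℂ)) = 0 := by linear_combination h
        rcases mul_eq_zero.mp h0 with h' | h'
        · exact h'
        · exact absurd h' hne
    refine ⟨Wᴴ, ?_, fun m => x' m m, fun m => (ev m : ℂ), ?_, ?_⟩
    · rw [← Matrix.star_eq_conjTranspose]; exact Unitary.star_mem hW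
    · rw [Matrix.conjTranspose_conjTranspose, ← hx']; exact hx'diag
    · rw [Matrix.conjTranspose_conjTranspose, hE, hF]

set_option maxHeartbeats 1000000 in
lemma diagonalize (x y : Mat 3) (hx : xᴴ = x) (hy : yᴴ = y)
    (htx : x.trace = 0) (hty : y.trace = 0)
    (htx2 : (x * x).trace = 3) (hty2 : (y * y).trace = 3)
    (hsum : x * x + y * y = (2 : ℂ) • 1) :
    ∃ u ∈ Matrix.unitaryGroup (Fin 3) ℂ, ∃ f g : Fin 3 → ℂ,
      u * x * uᴴ = diagonal f ∧ u * y * uᴴ = diagonal g := by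
  have hxh : x.IsHermitian := hx
  set U : Mat 3 := (hxh.eigenvectorUnitary : Mat 3) with hUdef
  have hU : U ∈ Matrix.unitaryGroup (Fin 3) ℂ := (hxh.eigenvectorUnitary).2
  have hU1 : U * Uᴴ = 1 := by
    rw [← Matrix.star_eq_conjTranspose]; exact Matrix.mem_unitaryGroup_iff.mp hU
  have hU2 : Uᴴ * U = 1 := by
    rw [← Matrix.star_eq_conjTranspose]; exact Matrix.mem_unitaryGroup_iff'.mp hU
  set d : Fin 3 → ℝ := hxh.eigenvalues with hd
  set Dx : Mat 3 := diagonal (fun m => (d m : ℂ)) with hDx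
  have hspec : x = U * Dx * Uᴴ := by
    rw [← Matrix.star_eq_conjTranspose]; exact hxh.spectral_theorem
  have hEx : Uᴴ * x * U = Dx := by
    rw [hspec]
    have h1 : Uᴴ * (U * Dx * Uᴴ) * U = (Uᴴ * U) * Dx * (Uᴴ * U) := by noncomm_ring
    rw [h1, hU2, one_mul, mul_one]
  set y₁ : Mat 3 := Uᴴ * y * U with hy₁
  have hy₁h : y₁ᴴ = y₁ := by
    rw [hy₁, Matrix.conjTranspose_mul, Matrix.conjTranspose_mul,
      Matrix.conjTranspose_conjTranspose, hy, Matrix.mul_assoc]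
  have hy₁sq : y₁ * y₁ = Uᴴ * (y * y) * U := by
    rw [hy₁]
    have h1 : Uᴴ * y * U * (Uᴴ * y * U) = Uᴴ * (y * (U * Uᴴ) * y) * U := by noncomm_ring
    rw [h1, hU1, mul_one]
  have hxsq : Dx * Dx = Uᴴ * (x * x) * U := by
    rw [← hEx]
    have h1 : Uᴴ * x * U * (Uᴴ * x * U) = Uᴴ * (x * (U * Uᴴ) * x) * U := by noncomm_ring
    rw [h1, hU1, mul_one]
  have htrD : Dx.trace = 0 := by
    rw [← hEx, Matrix.trace_mul_cycle, hU1, one_mul, htx]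
  have htrD2 : (Dx * Dx).trace = 3 := by
    rw [hxsq, Matrix.trace_mul_cycle, hU1, one_mul, htx2]
  have hds : ∑ i, d i = 0 := by
    rw [hDx, Matrix.trace_diagonal] at htrD
    exact_mod_cast htrD
  have hds2 : ∑ i, d i ^ 2 = 3 := by
    rw [hDx, Matrix.diagonal_mul_diagonal, Matrix.trace_diagonal] at htrD2
    have h' : ((∑ i, d i ^ 2 : ℝ) : ℂ) = ((3 : ℝ) : ℂ) := by
      push_cast
      rw [← htrD2]
      apply Finset.sum_congr rfl
      intro m _
      ring
    exact_mod_cast h'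
  have hty₁ : y₁.trace = 0 := by
    rw [hy₁, Matrix.trace_mul_cycle, hU1, one_mul, hty]
  have hty₁2 : (y₁ * y₁).trace = 3 := by
    rw [hy₁sq, Matrix.trace_mul_cycle, hU1, one_mul, hty2]
  have hyy₁ : y₁ * y₁ = diagonal (fun m => (2 : ℂ) - (d m : ℂ) ^ 2) := by
    have hyx : y * y = (2 : ℂ) • 1 - x * x := by rw [← hsum]; abel
    rw [hy₁sq, hyx, Matrix.mul_sub, Matrix.sub_mul, Matrix.mul_smul, Matrix.smul_mul,
      Matrix.mul_one, hU2, ← hxsq, hDx, Matrix.diagonal_mul_diagonal]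
    ext a b
    by_cases hab : a = b
    · subst hab
      simp only [Matrix.sub_apply, Matrix.smul_apply, Matrix.one_apply_eq,
        Matrix.diagonal_apply_eq, smul_eq_mul]
      ring
    · simp [Matrix.diagonal_apply_ne _ hab, Matrix.one_apply_ne hab]
  obtain ⟨w, hw, f, g, hwf, hwg⟩ := diagonalize_diag d y₁ hy₁h hds hds2 hty₁ hty₁2 hyy₁
  refine ⟨w * Uᴴ, mul_mem hw ?_, f, g, ?_, ?_⟩
  · rw [← Matrix.star_eq_conjTranspose]; exact Unitary.star_mem hU
  · rw [← hwf, ← hDx, ← hEx]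
    rw [Matrix.conjTranspose_mul, Matrix.conjTranspose_conjTranspose]
    noncomm_ring
  · rw [← hwg, hy₁]
    rw [Matrix.conjTranspose_mul, Matrix.conjTranspose_conjTranspose]
    noncomm_ring


lemma trace_ctm (m : Mat 3) :
    (mᴴ * m).trace = ((∑ j, ∑ i, Complex.normSq (m i j) : ℝ) : ℂ) := by
  push_cast
  rw [Matrix.trace]
  apply Finset.sum_congr rfl
  intro j _
  rw [Matrix.diag_apply, Matrix.mul_apply]
  apply Finset.sum_congr rfl
  intro i _
  rw [Matrix.conjTranspose_apply]
  simp [Complex.normSq_eq_conj_mul_self]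

lemma trace_ctm_pos (m : Mat 3) (hm : m ≠ 0) :
    ∃ t : ℝ, 0 < t ∧ (mᴴ * m).trace = (t : ℂ) := by
  refine ⟨∑ j, ∑ i, Complex.normSq (m i j), ?_, trace_ctm m⟩
  have hnn : ∀ j ∈ (Finset.univ : Finset (Fin 3)), 0 ≤ ∑ i, Complex.normSq (m i j) :=
    fun j _ => Finset.sum_nonneg fun i _ => Complex.normSq_nonneg _
  rcases (Finset.sum_nonneg hnn).lt_or_eq with h | h
  · exact h
  · exfalso
    apply hm
    ext i j
    have h1 : ∀ j ∈ (Finset.univ : Finset (Fin 3)), ∑ i, Complex.normSq (m i j) = 0 :=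
      (Finset.sum_eq_zero_iff_of_nonneg hnn).mp h.symm
    have h2 := (Finset.sum_eq_zero_iff_of_nonneg
      (fun i _ => Complex.normSq_nonneg (m i j))).mp (h1 j (Finset.mem_univ j)) i
      (Finset.mem_univ i)
    simpa using Complex.normSq_eq_zero.mp h2

/-- normalize a nonzero hermitian matrix to have `tr(x²) = 3`. -/
lemma normalize_herm (m : Mat 3) (hm : mᴴ = m) (hm0 : m ≠ 0) :
    ∃ ν : ℝ, 0 < ν ∧ ((((ν:ℂ) • m) * ((ν:ℂ) • m)).trace = 3) := by
  obtain ⟨t, ht, htr⟩ := trace_ctm_pos m hm0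
  refine ⟨Real.sqrt (3 / t), Real.sqrt_pos.mpr (by positivity), ?_⟩
  have key : (((Real.sqrt (3 / t) : ℂ)) * ((Real.sqrt (3 / t) : ℂ))) = ((3 / t : ℝ) : ℂ) := by
    rw [← Complex.ofReal_mul, Real.mul_self_sqrt (by positivity : (0:ℝ) ≤ 3 / t)]
  calc ((((Real.sqrt (3 / t):ℝ):ℂ) • m) * (((Real.sqrt (3 / t):ℝ):ℂ) • m)).trace
      = (((Real.sqrt (3 / t) : ℂ)) * ((Real.sqrt (3 / t) : ℂ))) * (m * m).trace := by
        rw [Matrix.smul_mul, Matrix.mul_smul, smul_smul, Matrix.trace_smul, smul_eq_mul]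
    _ = ((3 / t : ℝ) : ℂ) * (t : ℂ) := by
        rw [key]
        congr 1
        rw [← htr]
        congr 1
        rw [hm]
    _ = 3 := by
        rw [← Complex.ofReal_mul]
        norm_cast
        field_simp

set_option maxHeartbeats 1000000 in
/-- Stage 1: extract a hermitian "orthonormal pair" spanning `R`. -/
lemma exists_herm_pair (R : Submodule ℂ (Mat 3)) (hQG : IsQuantumGraph R)
    (hdim : Module.finrank ℂ ↥R = 2) (hreg : IsRegular R) :
    ∃ x y : Mat 3, xᴴ = x ∧ yᴴ = y ∧ x.trace = 0 ∧ y.trace = 0 ∧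
      (x * x).trace = 3 ∧ (y * y).trace = 3 ∧
      x * x + y * y = (2 : ℂ) • (1 : Mat 3) ∧
      Submodule.span ℂ {x, y} = R := by
  classical
  obtain ⟨dd, a, ⟨hmem, hspan, honb⟩, c, hc⟩ := hreg
  have h3 : ((3:ℕ) : ℂ) ≠ 0 := by norm_num
  have honb' : ∀ i j, ((a i)ᴴ * a j).trace = if i = j then 3 else 0 := by
    intro i j
    have h := honb i j
    rw [div_eq_iff h3] at h
    rw [h]
    split_ifs <;> norm_num
  -- linear independence of a
  have hli : LinearIndependent ℂ a := by
    rw [linearIndependent_iff']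
    intro s g hg i hi
    have h0 : ((a i)ᴴ * (∑ j ∈ s, g j • a j)).trace = 0 := by
      rw [hg, Matrix.mul_zero, Matrix.trace_zero]
    rw [Matrix.mul_sum, Matrix.trace_sum] at h0
    simp_rw [Matrix.mul_smul, Matrix.trace_smul, smul_eq_mul] at h0
    rw [Finset.sum_eq_single i (fun b _ hbi => by
        rw [honb' i b, if_neg (fun hh => hbi hh.symm), mul_zero])
      (fun h => absurd hi h)] at h0
    rw [honb' i i, if_pos rfl] at h0
    rcases mul_eq_zero.mp h0 with h' | h'
    · exact h'
    · norm_num at h'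
  have hdd : dd = 2 := by
    have hfr := finrank_span_eq_card hli
    rw [hspan, hdim] at hfr
    simpa using hfr.symm
  subst hdd
  -- c = 2
  have hc2 : c = 2 := by
    have htr := congrArg Matrix.trace hc
    rw [Matrix.trace_sum, Fin.sum_univ_two, Matrix.trace_smul, Matrix.trace_one,
      Matrix.trace_mul_comm (a 0) ((a 0)ᴴ), Matrix.trace_mul_comm (a 1) ((a 1)ᴴ),
      honb' 0 0, honb' 1 1] at htr
    norm_num at htr
    linear_combination -htr / 3
  rw [hc2] at hc
  have hane : ∀ i, a i ≠ 0 := by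
    intro i h
    have h3' := honb' i i
    rw [if_pos rfl, h, Matrix.mul_zero, Matrix.trace_zero] at h3'
    norm_num at h3'
  -- decomposition of any r into hermitian parts
  have hImI : Complex.I * -Complex.I = 1 := by
    rw [mul_neg, Complex.I_mul_I]; norm_num
  have hherm_decomp : ∀ r : Mat 3,
      r = ((1:ℂ)/2) • ((r + rᴴ) + Complex.I • ((-Complex.I) • (r - rᴴ))) := by
    intro r
    rw [smul_smul, hImI]
    module
  -- a nonzero hermitian element of R
  have hexherm : ∃ x₀, x₀ ∈ R ∧ x₀ᴴ = x₀ ∧ x₀ ≠ 0 := by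
    by_cases h1 : a 0 + (a 0)ᴴ = 0
    · refine ⟨(-Complex.I) • (a 0 - (a 0)ᴴ), ?_, ?_, ?_⟩
      · exact Submodule.smul_mem _ _ (Submodule.sub_mem _ (hmem 0) (hQG _ (hmem 0)).1)
      · rw [Matrix.conjTranspose_smul, Matrix.conjTranspose_sub,
          Matrix.conjTranspose_conjTranspose]
        have hstar : star (-Complex.I) = Complex.I := by simp
        rw [hstar]
        module
      · intro h0
        rcases smul_eq_zero.mp h0 with h' | h'
        · rw [neg_eq_zero] at h'; exact Complex.I_ne_zero h'
        · apply hane 0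
          have h2 : (a 0)ᴴ = - a 0 := by
            have hh := h1
            rwa [add_comm, add_eq_zero_iff_eq_neg] at hh
          rw [h2, sub_neg_eq_add] at h'
          have : (2:ℂ) • a 0 = 0 := by rw [two_smul]; exact h'
          rcases smul_eq_zero.mp this with h'' | h''
          · norm_num at h''
          · exact h''
    · exact ⟨a 0 + (a 0)ᴴ, Submodule.add_mem _ (hmem 0) (hQG _ (hmem 0)).1,
        by rw [Matrix.conjTranspose_add, Matrix.conjTranspose_conjTranspose, add_comm], h1⟩
  obtain ⟨x₀, hx₀R, hx₀h, hx₀0⟩ := hexherm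
  obtain ⟨ν, hν, hνtr⟩ := normalize_herm x₀ hx₀h hx₀0
  set x : Mat 3 := ((ν:ℝ):ℂ) • x₀ with hxdef
  have hxR : x ∈ R := Submodule.smul_mem _ _ hx₀R
  have hxh : xᴴ = x := by
    rw [hxdef, Matrix.conjTranspose_smul, hx₀h, Complex.star_def, Complex.conj_ofReal]
  have hxx3 : (x * x).trace = 3 := hνtr
  have hx0 : x ≠ 0 := by
    intro h
    rw [h, Matrix.zero_mul, Matrix.trace_zero] at hxx3
    norm_num at hxx3
  -- a hermitian element not proportional to x
  have hexh2 : ∃ h, h ∈ R ∧ hᴴ = h ∧ ¬ (∃ t : ℂ, h = t • x) := by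
    by_contra hcon
    push_neg at hcon
    have hRle : R ≤ Submodule.span ℂ {x} := by
      intro r hr
      obtain ⟨t₁, ht₁⟩ := hcon (r + rᴴ) (Submodule.add_mem _ hr (hQG r hr).1)
        (by rw [Matrix.conjTranspose_add, Matrix.conjTranspose_conjTranspose, add_comm])
      obtain ⟨t₂, ht₂⟩ := hcon ((-Complex.I) • (r - rᴴ))
        (Submodule.smul_mem _ _ (Submodule.sub_mem _ hr (hQG r hr).1))
        (by
          rw [Matrix.conjTranspose_smul, Matrix.conjTranspose_sub,
            Matrix.conjTranspose_conjTranspose]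
          have hstar : star (-Complex.I) = Complex.I := by simp
          rw [hstar]
          module)
      have hrx : r = ((1:ℂ)/2 * (t₁ + Complex.I * t₂)) • x := by
        conv_lhs => rw [hherm_decomp r]
        rw [ht₁, ht₂]
        module
      rw [hrx]
      exact Submodule.smul_mem _ _ (Submodule.mem_span_singleton_self x)
    have hle1 : Module.finrank ℂ ↥R ≤ 1 := by
      calc Module.finrank ℂ ↥R ≤ Module.finrank ℂ ↥(Submodule.span ℂ {x}) :=
            Submodule.finrank_mono hRle
        _ = 1 := finrank_span_singleton hx0
    rw [hdim] at hle1
    norm_num at hle1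
  obtain ⟨h, hhR, hhh, hhnx⟩ := hexh2
  have hreal : star ((x * h).trace) = (x * h).trace := by
    rw [← Matrix.trace_conjTranspose, Matrix.conjTranspose_mul, hxh, hhh,
      Matrix.trace_mul_comm]
  set κ : ℂ := ((x * h).trace) / 3 with hκ
  have hκreal : star κ = κ := by
    rw [hκ, star_div₀, hreal]
    norm_num
  set y₀ : Mat 3 := h - κ • x with hy₀def
  have hy₀R : y₀ ∈ R := Submodule.sub_mem _ hhR (Submodule.smul_mem _ _ hxR)
  have hy₀h : y₀ᴴ = y₀ := by
    rw [hy₀def, Matrix.conjTranspose_sub, Matrix.conjTranspose_smul, hκreal, hhh, hxh]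
  have hy₀0 : y₀ ≠ 0 := by
    intro h0
    apply hhnx
    refine ⟨κ, ?_⟩
    rw [hy₀def, sub_eq_zero] at h0
    exact h0
  have hxy₀ : (x * y₀).trace = 0 := by
    rw [hy₀def, Matrix.mul_sub, Matrix.trace_sub, Matrix.mul_smul, Matrix.trace_smul,
      smul_eq_mul, hxx3, hκ]
    field_simp
    ring
  obtain ⟨μ, hμ, hμtr⟩ := normalize_herm y₀ hy₀h hy₀0
  set y : Mat 3 := ((μ:ℝ):ℂ) • y₀ with hydef
  have hyR : y ∈ R := Submodule.smul_mem _ _ hy₀R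
  have hyh : yᴴ = y := by
    rw [hydef, Matrix.conjTranspose_smul, hy₀h, Complex.star_def, Complex.conj_ofReal]
  have hyy3 : (y * y).trace = 3 := hμtr
  have hy0 : y ≠ 0 := by
    intro h0
    rw [h0, Matrix.zero_mul, Matrix.trace_zero] at hyy3
    norm_num at hyy3
  have hxy : (x * y).trace = 0 := by
    rw [hydef, Matrix.mul_smul, Matrix.trace_smul, hxy₀, smul_zero]
  -- coefficients of x, y in the basis a
  have hrange : Set.range a = {a 0, a 1} := by
    ext m
    simp only [Set.mem_range, Set.mem_insert_iff, Set.mem_singleton_iff,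
      Fin.exists_fin_two]
    tauto
  rw [hrange] at hspan
  obtain ⟨p, q, hpq⟩ := Submodule.mem_span_pair.mp (show x ∈ Submodule.span ℂ {a 0, a 1} by rw [hspan]; exact hxR)
  obtain ⟨r', s', hrs⟩ := Submodule.mem_span_pair.mp (show y ∈ Submodule.span ℂ {a 0, a 1} by rw [hspan]; exact hyR)
  have hxconj : xᴴ = star p • (a 0)ᴴ + star q • (a 1)ᴴ := by
    rw [← hpq, Matrix.conjTranspose_add, Matrix.conjTranspose_smul, Matrix.conjTranspose_smul]
  have hyconj : yᴴ = star r' • (a 0)ᴴ + star s' • (a 1)ᴴ := by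
    rw [← hrs, Matrix.conjTranspose_add, Matrix.conjTranspose_smul, Matrix.conjTranspose_smul]
  -- Gram relations
  have expand : ∀ p' q' r'' s'' : ℂ,
      ((star p' • (a 0)ᴴ + star q' • (a 1)ᴴ) * (r'' • a 0 + s'' • a 1)).trace
        = star p' * r'' * 3 + star q' * s'' * 3 := by
    intro p' q' r'' s''
    rw [Matrix.add_mul, Matrix.mul_add, Matrix.mul_add]
    simp only [Matrix.smul_mul, Matrix.mul_smul, smul_smul, Matrix.trace_add,
      Matrix.trace_smul, smul_eq_mul, honb' 0 0, honb' 0 1, honb' 1 0, honb' 1 1]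
    norm_num
    ring
  have h11 : star p * p + star q * q = 1 := by
    have hh : (xᴴ * x).trace = 3 := by rw [hxh]; exact hxx3
    rw [hxconj] at hh
    conv_lhs at hh => rw [← hpq]
    rw [expand] at hh
    linear_combination hh / 3
  have h22 : star r' * r' + star s' * s' = 1 := by
    have hh : (yᴴ * y).trace = 3 := by rw [hyh]; exact hyy3
    rw [hyconj] at hh
    conv_lhs at hh => rw [← hrs]
    rw [expand] at hh
    linear_combination hh / 3
  have h12 : star p * r' + star q * s' = 0 := by
    have hh : (xᴴ * y).trace = 0 := by rw [hxh]; exact hxy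
    rw [hxconj] at hh
    conv_lhs at hh => rw [← hrs]
    rw [expand] at hh
    linear_combination hh / 3
  -- the 2x2 coefficient matrix is unitary
  set U2 : Matrix (Fin 2) (Fin 2) ℂ := !![p, q; r', s'] with hU2def
  have h12' : p * star r' + q * star s' = 0 := by
    have := congrArg star h12
    simpa [mul_comm] using this
  have hU2row : U2 * U2ᴴ = 1 := by
    have e00 : p * star p + q * star q = 1 := by linear_combination h11
    have e10 : r' * star p + s' * star q = 0 := by linear_combination h12
    have e11 : r' * star r' + s' * star s' = 1 := by linear_combination h22
    ext i j
    fin_cases i <;> fin_cases j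
    · simp [hU2def, Matrix.mul_apply, Fin.sum_univ_two, Matrix.one_apply,
        Matrix.conjTranspose_apply]
      simp only [← Complex.star_def]
      linear_combination e00
    · simp [hU2def, Matrix.mul_apply, Fin.sum_univ_two, Matrix.one_apply,
        Matrix.conjTranspose_apply]
      simp only [← Complex.star_def]
      linear_combination h12'
    · simp [hU2def, Matrix.mul_apply, Fin.sum_univ_two, Matrix.one_apply,
        Matrix.conjTranspose_apply]
      simp only [← Complex.star_def]
      linear_combination e10
    · simp [hU2def, Matrix.mul_apply, Fin.sum_univ_two, Matrix.one_apply,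
        Matrix.conjTranspose_apply]
      simp only [← Complex.star_def]
      linear_combination e11
  have hU2col : U2ᴴ * U2 = 1 := mul_eq_one_comm.mp hU2row
  have c00 : star p * p + star r' * r' = 1 := by
    have hcc := congrFun (congrFun hU2col 0) 0
    simp [hU2def, Matrix.mul_apply, Fin.sum_univ_two, Matrix.conjTranspose_apply,
      Matrix.one_apply] at hcc
    simp only [← Complex.star_def] at hcc
    linear_combination hcc
  have c01 : star p * q + star r' * s' = 0 := by
    have hcc := congrFun (congrFun hU2col 0) 1
    simp [hU2def, Matrix.mul_apply, Fin.sum_univ_two, Matrix.conjTranspose_apply,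
      Matrix.one_apply] at hcc
    simp only [← Complex.star_def] at hcc
    linear_combination hcc
  have c10 : star q * p + star s' * r' = 0 := by
    have hcc := congrFun (congrFun hU2col 1) 0
    simp [hU2def, Matrix.mul_apply, Fin.sum_univ_two, Matrix.conjTranspose_apply,
      Matrix.one_apply] at hcc
    simp only [← Complex.star_def] at hcc
    linear_combination hcc
  have c11 : star q * q + star s' * s' = 1 := by
    have hcc := congrFun (congrFun hU2col 1) 1
    simp [hU2def, Matrix.mul_apply, Fin.sum_univ_two, Matrix.conjTranspose_apply,
      Matrix.one_apply] at hcc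
    simp only [← Complex.star_def] at hcc
    linear_combination hcc
  -- expansion of x*x and y*y
  have hxx : x * x = (p * star p) • (a 0 * (a 0)ᴴ) + (p * star q) • (a 0 * (a 1)ᴴ)
      + (q * star p) • (a 1 * (a 0)ᴴ) + (q * star q) • (a 1 * (a 1)ᴴ) := by
    conv_lhs => rw [show x * x = x * xᴴ from by rw [hxh]]
    rw [hxconj]
    conv_lhs => rw [← hpq]
    rw [Matrix.add_mul, Matrix.mul_add, Matrix.mul_add]
    simp only [Matrix.smul_mul, Matrix.mul_smul, smul_smul]
    module
  have hyy2 : y * y = (r' * star r') • (a 0 * (a 0)ᴴ) + (r' * star s') • (a 0 * (a 1)ᴴ)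
      + (s' * star r') • (a 1 * (a 0)ᴴ) + (s' * star s') • (a 1 * (a 1)ᴴ) := by
    conv_lhs => rw [show y * y = y * yᴴ from by rw [hyh]]
    rw [hyconj]
    conv_lhs => rw [← hrs]
    rw [Matrix.add_mul, Matrix.mul_add, Matrix.mul_add]
    simp only [Matrix.smul_mul, Matrix.mul_smul, smul_smul]
    module
  have e1 : p * star p + r' * star r' = 1 := by linear_combination c00
  have e2 : p * star q + r' * star s' = 0 := by linear_combination c10
  have e3 : q * star p + s' * star r' = 0 := by linear_combination c01
  have e4 : q * star q + s' * star s' = 1 := by linear_combination c11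
  have hcomb : x * x + y * y = a 0 * (a 0)ᴴ + a 1 * (a 1)ᴴ := by
    rw [hxx, hyy2]
    have hgoal : (p * star p) • (a 0 * (a 0)ᴴ) + (p * star q) • (a 0 * (a 1)ᴴ)
        + (q * star p) • (a 1 * (a 0)ᴴ) + (q * star q) • (a 1 * (a 1)ᴴ)
        + ((r' * star r') • (a 0 * (a 0)ᴴ) + (r' * star s') • (a 0 * (a 1)ᴴ)
        + (s' * star r') • (a 1 * (a 0)ᴴ) + (s' * star s') • (a 1 * (a 1)ᴴ))
        = (p * star p + r' * star r') • (a 0 * (a 0)ᴴ)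
        + (p * star q + r' * star s') • (a 0 * (a 1)ᴴ)
        + (q * star p + s' * star r') • (a 1 * (a 0)ᴴ)
        + (q * star q + s' * star s') • (a 1 * (a 1)ᴴ) := by module
    rw [hgoal, e1, e2, e3, e4]
    simp
  have hsum2 : x * x + y * y = (2:ℂ) • (1 : Mat 3) := by
    rw [hcomb, ← Fin.sum_univ_two (fun i => a i * (a i)ᴴ), hc]
  -- span
  have hsub : Submodule.span ℂ {x, y} ≤ R := by
    rw [Submodule.span_le]
    intro v hv
    rcases hv with h | h
    · rw [h]; exact hxR
    · rw [Set.mem_singleton_iff] at h; rw [h]; exact hyR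
  have hxyset : ({x, y} : Set (Mat 3)) = Set.range ![x, y] := by
    ext v
    simp only [Set.mem_insert_iff, Set.mem_singleton_iff, Set.mem_range,
      Fin.exists_fin_two, Matrix.cons_val_zero, Matrix.cons_val_one, Matrix.head_cons]
    tauto
  have hind : LinearIndependent ℂ ![x, y] := by
    rw [linearIndependent_fin2]
    constructor
    · simpa using hy0
    · intro t ht
      simp only [Matrix.cons_val_one, Matrix.head_cons, Matrix.cons_val_zero] at ht
      rw [← ht, Matrix.smul_mul, Matrix.trace_smul, hyy3, smul_eq_mul] at hxy
      have ht0 : t = 0 := by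
        rcases mul_eq_zero.mp hxy with h' | h'
        · exact h'
        · norm_num at h'
      rw [ht0, zero_smul] at ht
      exact hx0 ht.symm
  have hfr2 : Module.finrank ℂ ↥(Submodule.span ℂ {x, y}) = 2 := by
    rw [hxyset, finrank_span_eq_card hind]
    simp
  have hspaneq : Submodule.span ℂ {x, y} = R :=
    Submodule.eq_of_le_of_finrank_le hsub (by rw [hdim, hfr2])
  exact ⟨x, y, hxh, hyh, (hQG x hxR).2, (hQG y hyR).2, hxx3, hyy3, hsum2, hspaneq⟩


lemma conjMap_apply {n : ℕ} (u m : Mat n) : conjMap u m = u * m * uᴴ := by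
  rw [conjMap]
  simp [LinearMap.mulLeft_apply, LinearMap.mulRight_apply, Matrix.mul_assoc]

lemma finrank_VT32_le : Module.finrank ℂ ↥VT32 ≤ 2 := by
  classical
  set m0 : Mat 3 := diagonal ![1, -1, 0] with hm0
  set m1 : Mat 3 := diagonal ![0, 1, -1] with hm1
  have hle : VT32 ≤ Submodule.span ℂ {m0, m1} := by
    intro m hm
    obtain ⟨htr, hoff⟩ := hm
    rw [Submodule.mem_span_pair]
    refine ⟨m 0 0, - m 2 2, ?_⟩
    have htr' : m 0 0 + m 1 1 + m 2 2 = 0 := by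
      rw [Matrix.trace] at htr
      simpa [Fin.sum_univ_three] using htr
    ext i j
    by_cases hij : i = j
    · subst hij
      fin_cases i <;>
        simp [hm0, hm1, Matrix.diagonal_apply_eq] <;>
        linear_combination -htr'
    · rw [hoff i j hij]
      simp [hm0, hm1, Matrix.diagonal_apply_ne _ hij]
  calc Module.finrank ℂ ↥VT32 ≤ Module.finrank ℂ ↥(Submodule.span ℂ {m0, m1}) :=
        Submodule.finrank_mono hle
    _ ≤ 2 := by
      have hset : ({m0, m1} : Set (Mat 3)) = Set.range ![m0, m1] := by
        ext v
        simp [Fin.exists_fin_two]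
        aesop
      rw [hset]
      have := finrank_span_le_card (R := ℂ) (Set.range ![m0, m1])
      refine this.trans ?_
      have : (Set.range ![m0, m1]).toFinset.card ≤ 2 := by
        rw [Set.toFinset_range]
        exact (Finset.card_image_le).trans (by simp)
      simpa using this

theorem stmt8' (R : Submodule ℂ (Mat 3)) (hQG : IsQuantumGraph R)
    (hdim : Module.finrank ℂ ↥R = 2) (hreg : IsRegular R) : Iso R VT32 := by
  classical
  obtain ⟨x, y, hx, hy, htx, hty, htx2, hty2, hsum, hspan⟩ :=
    exists_herm_pair R hQG hdim hreg
  obtain ⟨u, hu, f, g, huf, hug⟩ := diagonalize x y hx hy htx hty htx2 hty2 hsum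
  have hu1 : u * uᴴ = 1 := by
    rw [← Matrix.star_eq_conjTranspose]; exact Matrix.mem_unitaryGroup_iff.mp hu
  have hu2 : uᴴ * u = 1 := by
    rw [← Matrix.star_eq_conjTranspose]; exact Matrix.mem_unitaryGroup_iff'.mp hu
  refine ⟨u, hu, ?_⟩
  -- the image is the span of the two diagonal matrices
  have hmap : R.map (conjMap u) = Submodule.span ℂ {diagonal f, diagonal g} := by
    rw [← hspan, Submodule.map_span, Set.image_pair, conjMap_apply, conjMap_apply,
      huf, hug]
  -- trace is preserved under conjugation
  have htrace : ∀ m : Mat 3, (u * m * uᴴ).trace = m.trace := by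
    intro m
    rw [Matrix.trace_mul_cycle, hu2, one_mul]
  -- the two diagonal matrices belong to VT32
  have hfmem : diagonal f ∈ VT32 := by
    constructor
    · rw [← huf, htrace, htx]
    · intro i j hij; exact Matrix.diagonal_apply_ne _ hij
  have hgmem : diagonal g ∈ VT32 := by
    constructor
    · rw [← hug, htrace, hty]
    · intro i j hij; exact Matrix.diagonal_apply_ne _ hij
  have hle : R.map (conjMap u) ≤ VT32 := by
    rw [hmap]
    apply Submodule.span_le.mpr
    intro v hv
    rcases hv with h | h
    · rw [h]; exact hfmem
    · rw [Set.mem_singleton_iff] at h; rw [h]; exact hgmem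
  -- conjugation is a linear equivalence, so finrank is preserved
  have hcomp1 : (conjMap u).comp (conjMap uᴴ) = LinearMap.id := by
    apply LinearMap.ext
    intro m
    rw [LinearMap.comp_apply, conjMap_apply, conjMap_apply, LinearMap.id_apply,
      Matrix.conjTranspose_conjTranspose]
    have h1 : u * (uᴴ * m * u) * uᴴ = (u * uᴴ) * m * (u * uᴴ) := by noncomm_ring
    rw [h1, hu1, one_mul, mul_one]
  have hcomp2 : (conjMap uᴴ).comp (conjMap u) = LinearMap.id := by
    apply LinearMap.ext
    intro m
    rw [LinearMap.comp_apply, conjMap_apply, conjMap_apply, LinearMap.id_apply,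
      Matrix.conjTranspose_conjTranspose]
    have h1 : uᴴ * (u * m * uᴴ) * u = (uᴴ * u) * m * (uᴴ * u) := by noncomm_ring
    rw [h1, hu2, one_mul, mul_one]
  set e : Mat 3 ≃ₗ[ℂ] Mat 3 := LinearEquiv.ofLinear (conjMap u) (conjMap uᴴ) hcomp1 hcomp2
    with he
  have hre : R.map (conjMap u) = R.map (e : Mat 3 →ₗ[ℂ] Mat 3) := rfl
  have hfr : Module.finrank ℂ ↥(R.map (conjMap u)) = 2 := by
    rw [hre, LinearEquiv.finrank_map_eq e R, hdim]
  apply Submodule.eq_of_le_of_finrank_le hle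
  rw [hfr]
  exact finrank_VT32_le

/-- a regular 2-dimensional quantum graph in `M_3(ℂ)` is isomorphic to the
quantum graph of traceless diagonal matrices. -/
theorem stmt8 (R : Submodule ℂ (Mat 3)) (hQG : IsQuantumGraph R)
    (hdim : Module.finrank ℂ ↥R = 2) (hreg : IsRegular R) : Iso R VT32 :=
  stmt8' R hQG hdim hreg

end QG
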